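/- Let F_m (m ≥ 1) be the star triangle (friendship graph) consisting of m triangles sharing a single common vertex. Then I(F_m, t) = (1+2t)^m + t; in particular I(F_m, −1) = (−1)^m − 1, so I(F_m, −1) = −2 if m is odd and I(F_m, −1) = 0 if m is even. Consequently deg h_{F_m} = α(F_m) if m is odd, and deg h_{F_m} = α(F_m) − 1 if m is even. -/

import Mathlib

open Finset Polynomial

/-- Every subset of a finite type gets a `Fintype` instance (classically). -/
noncomputable instance fintypeOfSet {V : Type*} [Finite V] (s : Set V) : Fintype ↥s :=
  Fintype.ofFinite _

/-- `s` is an independent set of the graph `G`: no two of its vertices are adjacent. -/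
def IsIndepSet {V : Type*} (G : SimpleGraph V) (s : Finset V) : Prop :=
  ∀ u ∈ s, ∀ v ∈ s, ¬ G.Adj u v

/-- The finset of all independent sets of `G`. -/
noncomputable def indepFinsets {V : Type*} [Fintype V] (G : SimpleGraph V) :
    Finset (Finset V) :=
  @Finset.filter _ (fun s => IsIndepSet G s) (Classical.decPred _) Finset.univ

/-- `sCount G i` is the number of independent sets of size `i` in `G`. -/
noncomputable def sCount {V : Type*} [Fintype V] (G : SimpleGraph V) (i : ℕ) : ℕ :=
  ((indepFinsets G).filter (fun s => s.card = i)).card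

/-- The independence number `α(G)`: the maximum size of an independent set. -/
noncomputable def indepNum {V : Type*} [Fintype V] (G : SimpleGraph V) : ℕ :=
  (indepFinsets G).sup Finset.card

/-- The independence polynomial `I(G,t) = Σ_i s_i(G) t^i ∈ ℤ[t]`. -/
noncomputable def indepPoly {V : Type*} [Fintype V] (G : SimpleGraph V) : Polynomial ℤ :=
  ∑ i ∈ Finset.range (indepNum G + 1), Polynomial.C (sCount G i : ℤ) * Polynomial.X ^ i

/-- The h-polynomial of the edge ideal of `G`:
`h_G(t) = Σ_i s_i(G) t^i (1-t)^{α(G)-i} ∈ ℤ[t]`. -/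
noncomputable def hPoly {V : Type*} [Fintype V] (G : SimpleGraph V) : Polynomial ℤ :=
  ∑ i ∈ Finset.range (indepNum G + 1),
    Polynomial.C (sCount G i : ℤ) * Polynomial.X ^ i *
      (1 - Polynomial.X) ^ (indepNum G - i)

/-- The degree of a vertex in a finite simple graph. -/
noncomputable def deg {V : Type*} [Fintype V] (G : SimpleGraph V) (v : V) : ℕ :=
  (@Finset.filter _ (fun u => G.Adj v u) (Classical.decPred _) Finset.univ).card

/-- The star triangle (friendship graph) `F_m`: `m` triangles sharing the single common
vertex `none`; the vertex `some (i, a)` is the `a`-th outer vertex of the `i`-th triangle. -/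
def friendship (m : ℕ) : SimpleGraph (Option (Fin m × Fin 2)) where
  Adj x y := x ≠ y ∧ (x = none ∨ y = none ∨ ∃ i a b, x = some (i, a) ∧ y = some (i, b))
  symm := by
    constructor
    rintro x y ⟨hne, h⟩
    refine ⟨hne.symm, ?_⟩
    rcases h with h | h | ⟨i, a, b, hx, hy⟩
    · exact Or.inr (Or.inl h)
    · exact Or.inl h
    · exact Or.inr (Or.inr ⟨i, b, a, hy, hx⟩)
  loopless := ⟨fun x h => h.1 rfl⟩

/-! ### Auxiliary lemmas -/

lemma mem_indepFinsets {V : Type*} [Fintype V] (G : SimpleGraph V) (s : Finset V) :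
    s ∈ indepFinsets G ↔ IsIndepSet G s := by
  classical
  simp [indepFinsets]

lemma sum_indepFinsets_eq {V : Type*} [Fintype V] (G : SimpleGraph V) (F : ℕ → Polynomial ℤ) :
    ∑ i ∈ Finset.range (indepNum G + 1), Polynomial.C (sCount G i : ℤ) * F i
      = ∑ S ∈ indepFinsets G, F S.card := by
  classical
  rw [← Finset.sum_fiberwise_of_maps_to (g := Finset.card)
    (t := Finset.range (indepNum G + 1))
    (fun S hS => Finset.mem_range.2 (Nat.lt_succ_of_le (Finset.le_sup hS)))]
  refine Finset.sum_congr rfl fun i _ => ?_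
  rw [Finset.sum_congr rfl (fun S hS => by rw [(Finset.mem_filter.1 hS).2] :
    ∀ S ∈ (indepFinsets G).filter (fun S => S.card = i), F S.card = F i)]
  rw [Finset.sum_const, sCount, nsmul_eq_mul, Polynomial.C_eq_natCast]

noncomputable def Phi {m : ℕ} (f : Fin m → Option (Fin 2)) :
    Finset (Option (Fin m × Fin 2)) :=
  @Finset.filter _ (fun v => ∃ j a, v = some (j, a) ∧ f j = some a)
    (Classical.decPred _) Finset.univ

lemma mem_Phi {m : ℕ} (f : Fin m → Option (Fin 2)) (v : Option (Fin m × Fin 2)) :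
    v ∈ Phi f ↔ ∃ j a, v = some (j, a) ∧ f j = some a := by
  simp [Phi]

def Psi {m : ℕ} (S : Finset (Option (Fin m × Fin 2))) (j : Fin m) : Option (Fin 2) :=
  if some (j, 0) ∈ S then some 0 else if some (j, 1) ∈ S then some 1 else none

lemma Phi_indep {m : ℕ} (f : Fin m → Option (Fin 2)) :
    IsIndepSet (friendship m) (Phi f) := by
  intro u hu v hv hadj
  obtain ⟨j, a, rfl, hfa⟩ := (mem_Phi f u).1 hu
  obtain ⟨j', b, rfl, hfb⟩ := (mem_Phi f v).1 hv
  obtain ⟨hne, h⟩ := hadj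
  rcases h with h | h | ⟨i, a', b', hx, hy⟩
  · simp at h
  · simp at h
  · simp only [Option.some.injEq, Prod.mk.injEq] at hx hy
    obtain ⟨rfl, rfl⟩ := hx
    obtain ⟨h1, rfl⟩ := hy
    subst h1
    rw [hfa, Option.some.injEq] at hfb
    subst hfb
    exact hne rfl

lemma none_not_mem_Phi {m : ℕ} (f : Fin m → Option (Fin 2)) : none ∉ Phi f := by
  rw [mem_Phi]
  rintro ⟨j, a, h, -⟩
  exact Option.some_ne_none _ h.symm

lemma Phi_eq_image {m : ℕ} (f : Fin m → Option (Fin 2)) :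
    Phi f = (Finset.univ.filter (fun j => f j ≠ none)).image
      (fun j => some (j, (f j).getD 0)) := by
  ext v
  rw [mem_Phi, Finset.mem_image]
  constructor
  · rintro ⟨j, a, rfl, hfa⟩
    exact ⟨j, Finset.mem_filter.2 ⟨Finset.mem_univ _, by simp [hfa]⟩, by simp [hfa]⟩
  · rintro ⟨j, hj, rfl⟩
    obtain ⟨a, hfa⟩ := Option.ne_none_iff_exists'.1 (Finset.mem_filter.1 hj).2
    exact ⟨j, a, by simp [hfa], hfa⟩

lemma card_Phi {m : ℕ} (f : Fin m → Option (Fin 2)) :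
    (Phi f).card = (Finset.univ.filter (fun j => f j ≠ none)).card := by
  rw [Phi_eq_image]
  refine Finset.card_image_of_injOn (fun x _ y _ h => ?_)
  have h' : x = y ∧ (f x).getD 0 = (f y).getD 0 := by simpa using h
  exact h'.1

lemma Psi_Phi {m : ℕ} (f : Fin m → Option (Fin 2)) : Psi (Phi f) = f := by
  funext j
  have h0 : (some (j, (0 : Fin 2)) ∈ Phi f) ↔ f j = some 0 := by
    rw [mem_Phi]
    constructor
    · rintro ⟨j', a, h, hfa⟩
      simp only [Option.some.injEq, Prod.mk.injEq] at h
      obtain ⟨rfl, rfl⟩ := h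
      exact hfa
    · intro h; exact ⟨j, 0, rfl, h⟩
  have h1 : (some (j, (1 : Fin 2)) ∈ Phi f) ↔ f j = some 1 := by
    rw [mem_Phi]
    constructor
    · rintro ⟨j', a, h, hfa⟩
      simp only [Option.some.injEq, Prod.mk.injEq] at h
      obtain ⟨rfl, rfl⟩ := h
      exact hfa
    · intro h; exact ⟨j, 1, rfl, h⟩
  unfold Psi
  rcases hfj : f j with _ | a
  · rw [if_neg (by rw [h0, hfj]; simp), if_neg (by rw [h1, hfj]; simp)]
  · fin_cases a
    · rw [if_pos (h0.2 hfj)]; exact hfj.symm ▸ rfl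
    · rw [if_neg (by rw [h0, hfj]; simp), if_pos (h1.2 hfj)]
      exact hfj.symm ▸ rfl

lemma Phi_Psi {m : ℕ} (S : Finset (Option (Fin m × Fin 2)))
    (hS : IsIndepSet (friendship m) S) (hnone : none ∉ S) : Phi (Psi S) = S := by
  ext v
  rw [mem_Phi]
  constructor
  · rintro ⟨j, a, rfl, hfa⟩
    unfold Psi at hfa
    split_ifs at hfa with hmem0 hmem1
    · rw [Option.some.injEq] at hfa; subst hfa; exact hmem0
    · rw [Option.some.injEq] at hfa; subst hfa; exact hmem1
  · intro hv
    rcases v with _ | ⟨j, a⟩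
    · exact absurd hv hnone
    refine ⟨j, a, rfl, ?_⟩
    unfold Psi
    fin_cases a
    · rw [if_pos (show some (j, (0 : Fin 2)) ∈ S from hv)]; rfl
    · rw [if_neg, if_pos (show some (j, (1 : Fin 2)) ∈ S from hv)]
      · rfl
      · intro h0
        exact hS _ h0 _ hv ⟨by simp, Or.inr (Or.inr ⟨j, 0, 1, rfl, rfl⟩)⟩

lemma eq_singleton_none {m : ℕ} {S : Finset (Option (Fin m × Fin 2))}
    (hS : IsIndepSet (friendship m) S) (hn : none ∈ S) : S = {none} := by
  refine Finset.eq_singleton_iff_unique_mem.2 ⟨hn, ?_⟩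
  intro v hv
  by_contra hne
  exact hS _ hn _ hv ⟨fun h => hne h.symm, Or.inl rfl⟩

lemma filter_none_mem {m : ℕ} :
    (indepFinsets (friendship m)).filter (fun S => none ∈ S)
      = {({none} : Finset (Option (Fin m × Fin 2)))} := by
  ext S
  simp only [Finset.mem_filter, Finset.mem_singleton, mem_indepFinsets]
  constructor
  · rintro ⟨hind, hmem⟩
    exact eq_singleton_none hind hmem
  · rintro rfl
    refine ⟨?_, Finset.mem_singleton_self _⟩
    intro u hu v hv
    rw [Finset.mem_singleton] at hu hv
    subst hu; subst hv
    exact fun h => h.1 rfl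

lemma prod_ite_none {m : ℕ} (u v : Polynomial ℤ) (f : Fin m → Option (Fin 2)) :
    ∏ j : Fin m, (if f j = none then u else v)
      = v ^ (Finset.univ.filter (fun j => f j ≠ none)).card
        * u ^ (m - (Finset.univ.filter (fun j => f j ≠ none)).card) := by
  classical
  rw [Finset.prod_ite, Finset.prod_const, Finset.prod_const, mul_comm]
  have hadd := Finset.card_filter_add_card_filter_not
    (s := (Finset.univ : Finset (Fin m))) (p := fun j => f j = none)
  rw [Finset.card_univ, Fintype.card_fin] at hadd
  simp only [ne_eq]
  congr 2
  omega

lemma master {m : ℕ} (u v : Polynomial ℤ) :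
    ∑ S ∈ indepFinsets (friendship m), v ^ S.card * u ^ (m - S.card)
      = (u + 2 * v) ^ m + v * u ^ (m - 1) := by
  classical
  rw [← Finset.sum_filter_add_sum_filter_not (indepFinsets (friendship m))
    (fun S => none ∈ S), filter_none_mem, Finset.sum_singleton,
    Finset.card_singleton, pow_one, add_comm]
  congr 1
  have h2 : ∑ S ∈ (indepFinsets (friendship m)).filter (fun S => ¬ none ∈ S),
      v ^ S.card * u ^ (m - S.card)
      = ∑ f ∈ (Finset.univ : Finset (Fin m → Option (Fin 2))),
          ∏ j : Fin m, (if f j = none then u else v) := by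
    refine Finset.sum_nbij' (i := Psi) (j := Phi) (fun S _ => Finset.mem_univ _)
      (fun f _ => ?_) (fun S hS => ?_) (fun f _ => Psi_Phi f) (fun S hS => ?_)
    · rw [Finset.mem_filter, mem_indepFinsets]
      exact ⟨Phi_indep f, none_not_mem_Phi f⟩
    · rw [Finset.mem_filter, mem_indepFinsets] at hS
      exact Phi_Psi S hS.1 hS.2
    · rw [Finset.mem_filter, mem_indepFinsets] at hS
      rw [prod_ite_none, ← card_Phi, Phi_Psi S hS.1 hS.2]
  rw [h2]
  rw [← Fintype.piFinset_univ,
    ← Finset.prod_univ_sum (t := fun _ : Fin m => (Finset.univ : Finset (Option (Fin 2))))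
      (f := fun _ o => if o = none then u else v)]
  have hone : ∀ j : Fin m,
      ∑ o ∈ (Finset.univ : Finset (Option (Fin 2))), (if o = none then u else v)
        = u + 2 * v := by
    intro j
    rw [Fintype.sum_option]
    simp [two_mul]
  rw [Finset.prod_congr rfl (fun j _ => hone j), Finset.prod_const,
    Finset.card_univ, Fintype.card_fin]

lemma indepNum_friendship {m : ℕ} (hm : 1 ≤ m) : indepNum (friendship m) = m := by
  apply le_antisymm
  · apply Finset.sup_le
    intro S hS
    rw [mem_indepFinsets] at hS
    by_cases hn : (none : Option (Fin m × Fin 2)) ∈ S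
    · rw [eq_singleton_none hS hn]
      simpa using hm
    · have h : S.card = (Phi (Psi S)).card := by rw [Phi_Psi S hS hn]
      rw [h, card_Phi]
      exact (Finset.card_filter_le _ _).trans (by simp)
  · have h1 : Phi (fun _ : Fin m => some (0 : Fin 2)) ∈ indepFinsets (friendship m) :=
      (mem_indepFinsets _ _).2 (Phi_indep _)
    have h2 : (Phi (fun _ : Fin m => some (0 : Fin 2))).card = m := by
      rw [card_Phi]
      simp
    have h3 := Finset.le_sup (f := Finset.card) h1
    rw [indepNum]
    omega

lemma indepPoly_closed {m : ℕ} : indepPoly (friendship m) = (1 + 2 * X) ^ m + X := by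
  have h := sum_indepFinsets_eq (friendship m) (fun i => X ^ i)
  rw [indepPoly, h]
  have h2 := master (m := m) 1 X
  simp only [one_pow, mul_one] at h2
  rw [h2]

lemma hPoly_closed {m : ℕ} (hm : 1 ≤ m) :
    hPoly (friendship m) = (1 + X) ^ m + X * (1 - X) ^ (m - 1) := by
  have hα := indepNum_friendship hm
  rw [hPoly, hα]
  have h := sum_indepFinsets_eq (friendship m) (fun i => X ^ i * (1 - X) ^ (m - i))
  rw [hα] at h
  rw [show (∑ i ∈ Finset.range (m + 1),
      C (sCount (friendship m) i : ℤ) * X ^ i * (1 - X) ^ (m - i))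
      = ∑ i ∈ Finset.range (m + 1),
        C (sCount (friendship m) i : ℤ) * (X ^ i * (1 - X) ^ (m - i)) from
    Finset.sum_congr rfl fun i _ => mul_assoc _ _ _]
  rw [h, master (m := m) (1 - X) X,
    show (1 - X + 2 * X : Polynomial ℤ) = 1 + X by ring]

lemma coeff_one_sub_X_pow (n k : ℕ) :
    ((1 - X : Polynomial ℤ) ^ n).coeff k = (-1) ^ k * n.choose k := by
  induction n generalizing k with
  | zero =>
    cases k with
    | zero => simp
    | succ k => simp [Polynomial.coeff_one]
  | succ n ih =>
    have hsplit : ((1 - X : Polynomial ℤ)) ^ (n + 1) = (1 - X) ^ n - X * (1 - X) ^ n := by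
      ring
    rw [hsplit, Polynomial.coeff_sub]
    cases k with
    | zero => simp [ih, Polynomial.mul_coeff_zero]
    | succ k =>
      rw [Polynomial.coeff_X_mul, ih, ih, Nat.choose_succ_succ]
      push_cast
      ring

lemma natDegree_one_sub_X : (1 - X : Polynomial ℤ).natDegree = 1 := by
  have : (1 - X : Polynomial ℤ) = -(X - Polynomial.C 1) := by
    rw [Polynomial.C_1]; ring
  rw [this, Polynomial.natDegree_neg, Polynomial.natDegree_X_sub_C]

lemma natDegree_hclosed_le {m : ℕ} (hm : 1 ≤ m) :
    ((1 + X : Polynomial ℤ) ^ m + X * (1 - X) ^ (m - 1)).natDegree ≤ m := by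
  refine (Polynomial.natDegree_add_le _ _).trans (max_le ?_ ?_)
  · refine (Polynomial.natDegree_pow_le).trans ?_
    have : (1 + X : Polynomial ℤ).natDegree = 1 := by
      rw [add_comm, ← Polynomial.C_1, Polynomial.natDegree_X_add_C]
    rw [this, mul_one]
  · refine (Polynomial.natDegree_mul_le).trans ?_
    have h1 : (X : Polynomial ℤ).natDegree = 1 := Polynomial.natDegree_X
    have h2 : ((1 - X : Polynomial ℤ) ^ (m - 1)).natDegree ≤ m - 1 := by
      refine (Polynomial.natDegree_pow_le).trans ?_
      rw [natDegree_one_sub_X, mul_one]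
    omega

lemma coeff_hclosed_top {n : ℕ} :
    ((1 + X : Polynomial ℤ) ^ (n + 1) + X * (1 - X) ^ n).coeff (n + 1)
      = 1 + (-1) ^ n := by
  rw [Polynomial.coeff_add, Polynomial.coeff_one_add_X_pow, Nat.choose_self,
    Polynomial.coeff_X_mul, coeff_one_sub_X_pow, Nat.choose_self]
  push_cast
  ring

lemma h_natDegree_odd {m : ℕ} (hm : 1 ≤ m) (hodd : Odd m) :
    ((1 + X : Polynomial ℤ) ^ m + X * (1 - X) ^ (m - 1)).natDegree = m := by
  obtain ⟨n, rfl⟩ : ∃ n, m = n + 1 := ⟨m - 1, (Nat.succ_pred_eq_of_pos hm).symm⟩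
  rw [Nat.add_sub_cancel]
  have hn : Even n := Nat.not_odd_iff_even.1 (Nat.odd_add_one.1 hodd)
  have hc : ((1 + X : Polynomial ℤ) ^ (n + 1) + X * (1 - X) ^ n).coeff (n + 1) = 2 := by
    rw [coeff_hclosed_top, Even.neg_one_pow hn]
    norm_num
  apply le_antisymm
  · have h := natDegree_hclosed_le (m := n + 1) (by omega)
    rwa [Nat.add_sub_cancel] at h
  · apply Polynomial.le_natDegree_of_ne_zero
    rw [hc]
    norm_num

lemma h_natDegree_even {m : ℕ} (hm : 1 ≤ m) (hev : Even m) :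
    ((1 + X : Polynomial ℤ) ^ m + X * (1 - X) ^ (m - 1)).natDegree = m - 1 := by
  obtain ⟨n, rfl⟩ : ∃ n, m = n + 2 := by
    rcases hev with ⟨k, hk⟩
    exact ⟨k + k - 2, by omega⟩
  rw [show n + 2 - 1 = n + 1 from rfl]
  have hn : Even n := by
    rcases hev with ⟨k, hk⟩
    exact ⟨k - 1, by omega⟩
  have hle : ((1 + X : Polynomial ℤ) ^ (n + 2) + X * (1 - X) ^ (n + 1)).natDegree ≤ n + 2 := by
    have h := natDegree_hclosed_le (m := n + 2) (by omega)
    rwa [show n + 2 - 1 = n + 1 from rfl] at h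
  have hc0 : ((1 + X : Polynomial ℤ) ^ (n + 2) + X * (1 - X) ^ (n + 1)).coeff (n + 2) = 0 := by
    rw [show n + 2 = (n + 1) + 1 from rfl, coeff_hclosed_top, Odd.neg_one_pow hn.add_one]
    ring
  have hch : ((n + 2 : ℕ)).choose (n + 1) = n + 2 := by
    rw [show n + 2 = (n + 1) + 1 from rfl, Nat.choose_succ_self_right]
  have hc1 : ((1 + X : Polynomial ℤ) ^ (n + 2) + X * (1 - X) ^ (n + 1)).coeff (n + 1)
      = ((n + 2 : ℕ) : ℤ) + ((n + 1 : ℕ) : ℤ) := by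
    rw [Polynomial.coeff_add, Polynomial.coeff_one_add_X_pow, Polynomial.coeff_X_mul,
      coeff_one_sub_X_pow, hch, Nat.choose_succ_self_right, Even.neg_one_pow hn, one_mul]
  apply le_antisymm
  · refine Polynomial.natDegree_le_iff_coeff_eq_zero.2 fun N hN => ?_
    rcases eq_or_lt_of_le (show n + 2 ≤ N by omega) with rfl | hlt
    · exact hc0
    · exact Polynomial.coeff_eq_zero_of_natDegree_lt (lt_of_le_of_lt hle hlt)
  · apply Polynomial.le_natDegree_of_ne_zero
    rw [hc1]
    push_cast
    omega

/-- For the friendship graph `F_m` (`m ≥ 1`):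
`I(F_m,t) = (1+2t)^m + t`, hence `I(F_m,-1) = (-1)^m - 1`, i.e. `-2` for odd `m` and `0`
for even `m`; consequently `deg h_{F_m} = α(F_m)` for odd `m` and
`deg h_{F_m} = α(F_m) - 1` for even `m`. -/
theorem indepPoly_friendship (m : ℕ) (hm : 1 ≤ m) :
    indepPoly (friendship m) = (1 + 2 * Polynomial.X) ^ m + Polynomial.X ∧
    (indepPoly (friendship m)).eval (-1) = (-1) ^ m - 1 ∧
    (Odd m → (indepPoly (friendship m)).eval (-1) = -2) ∧
    (Even m → (indepPoly (friendship m)).eval (-1) = 0) ∧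
    (Odd m → (hPoly (friendship m)).natDegree = indepNum (friendship m)) ∧
    (Even m → (hPoly (friendship m)).natDegree = indepNum (friendship m) - 1) := by
  have hI : indepPoly (friendship m) = (1 + 2 * Polynomial.X) ^ m + Polynomial.X :=
    indepPoly_closed
  have hα := indepNum_friendship hm
  have hh := hPoly_closed hm
  have hev : (indepPoly (friendship m)).eval (-1) = (-1) ^ m - 1 := by
    rw [hI]
    simp
    ring
  refine ⟨hI, hev, ?_, ?_, ?_, ?_⟩
  · intro hodd
    rw [hev, Odd.neg_one_pow hodd]
    norm_num
  · intro heven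
    rw [hev, Even.neg_one_pow heven]
    norm_num
  · intro hodd
    rw [hh, hα]
    exact h_natDegree_odd hm hodd
  · intro heven
    rw [hh, hα]
    exact h_natDegree_even hm heven
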